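/- Let G be a connected simple graph of order n ≥ 1. Then the distinguishing index of the middle graph satisfies D'(M(G)) ≤ 3. -/

import Mathlib

open SimpleGraph

/-- The subdivision graph `S(G)`: each edge `{u,v}` of `G` is replaced by a new
vertex (the element of `G.edgeSet`) adjacent to both `u` and `v`. -/
def subdivisionGraph {V : Type*} (G : SimpleGraph V) : SimpleGraph (V ⊕ G.edgeSet) where
  Adj x y :=
    match x, y with
    | Sum.inl u, Sum.inr e => u ∈ (e : Sym2 V)
    | Sum.inr e, Sum.inl u => u ∈ (e : Sym2 V)
    | _, _ => False
  symm := ⟨by rintro (u | e) (v | f) h <;> simp_all⟩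
  loopless := ⟨by rintro (u | e) h <;> simp_all⟩

/-- The central graph `C(G)`: obtained from the subdivision graph `S(G)` by joining
every pair of distinct vertices of `G` that are non-adjacent in `G`. -/
def centralGraph {V : Type*} (G : SimpleGraph V) : SimpleGraph (V ⊕ G.edgeSet) where
  Adj x y :=
    match x, y with
    | Sum.inl u, Sum.inl v => u ≠ v ∧ ¬ G.Adj u v
    | Sum.inl u, Sum.inr e => u ∈ (e : Sym2 V)
    | Sum.inr e, Sum.inl u => u ∈ (e : Sym2 V)
    | Sum.inr _, Sum.inr _ => False
  symm := by
    refine ⟨?_⟩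
    rintro (u | e) (v | f) h
    · exact ⟨h.1.symm, fun a => h.2 a.symm⟩
    · exact h
    · exact h
    · exact h
  loopless := by
    refine ⟨?_⟩
    rintro (u | e) h
    · exact h.1 rfl
    · exact h

/-- The middle graph `M(G)`: obtained from the subdivision graph `S(G)` by joining
each pair of distinct subdivided vertices corresponding to adjacent edges of `G`. -/
def middleGraph {V : Type*} (G : SimpleGraph V) : SimpleGraph (V ⊕ G.edgeSet) where
  Adj x y :=
    match x, y with
    | Sum.inl u, Sum.inr e => u ∈ (e : Sym2 V)
    | Sum.inr e, Sum.inl u => u ∈ (e : Sym2 V)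
    | Sum.inr e, Sum.inr f => e ≠ f ∧ ∃ u, u ∈ (e : Sym2 V) ∧ u ∈ (f : Sym2 V)
    | Sum.inl _, Sum.inl _ => False
  symm := by
    refine ⟨?_⟩
    rintro (u | e) (v | f) h
    · exact h
    · exact h
    · exact h
    · exact ⟨h.1.symm, h.2.imp fun u hu => ⟨hu.2, hu.1⟩⟩
  loopless := by
    refine ⟨?_⟩
    rintro (u | e) h
    · exact h
    · exact h.1 rfl

/-- The line graph `L(G)`: vertices are the edges of `G`, two distinct edges being
adjacent when they share an endpoint. -/
def lineG {V : Type*} (G : SimpleGraph V) : SimpleGraph G.edgeSet where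
  Adj e f := e ≠ f ∧ ∃ u, u ∈ (e : Sym2 V) ∧ u ∈ (f : Sym2 V)
  symm := ⟨fun e f h => ⟨h.1.symm, h.2.imp fun u hu => ⟨hu.2, hu.1⟩⟩⟩
  loopless := ⟨fun e h => h.1 rfl⟩

/-- The endline graph `G⁺`: to each vertex `v` of `G` we attach a new pendant
vertex; `Sum.inl` is the copy of `V(G)` and `Sum.inr` are the new vertices. -/
def endlineGraph {V : Type*} (G : SimpleGraph V) : SimpleGraph (V ⊕ V) where
  Adj x y :=
    match x, y with
    | Sum.inl u, Sum.inl v => G.Adj u v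
    | Sum.inl u, Sum.inr v => u = v
    | Sum.inr u, Sum.inl v => u = v
    | Sum.inr _, Sum.inr _ => False
  symm := by
    refine ⟨?_⟩
    rintro (u | u) (v | v) h
    · exact h.symm
    · exact h.symm
    · exact h.symm
    · exact h
  loopless := by
    refine ⟨?_⟩
    rintro (u | u) h
    · exact G.irrefl h
    · exact h

/-- The join `G₁ + G₂` of two vertex-disjoint graphs: their disjoint union together
with all edges between the two vertex sets. -/
def joinGraph {V₁ V₂ : Type*} (G₁ : SimpleGraph V₁) (G₂ : SimpleGraph V₂) :
    SimpleGraph (V₁ ⊕ V₂) where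
  Adj x y :=
    match x, y with
    | Sum.inl u, Sum.inl v => G₁.Adj u v
    | Sum.inr u, Sum.inr v => G₂.Adj u v
    | Sum.inl _, Sum.inr _ => True
    | Sum.inr _, Sum.inl _ => True
  symm := by
    refine ⟨?_⟩
    rintro (u | u) (v | v) h
    · exact h.symm
    · trivial
    · trivial
    · exact h.symm
  loopless := by
    refine ⟨?_⟩
    rintro (u | u) h
    · exact G₁.irrefl h
    · exact G₂.irrefl h

/-- The maximum degree `Δ(H)` of a graph (as a supremum of cardinalities of
neighborhoods, which agrees with the usual maximum degree for finite graphs). -/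
noncomputable def maxDeg {W : Type*} (H : SimpleGraph W) : ℕ :=
  sSup {k | ∃ v : W, k = (H.neighborSet v).ncard}

/-- A graph is regular if all vertices have the same degree. -/
def IsRegularGraph {W : Type*} (H : SimpleGraph W) : Prop :=
  ∀ u v : W, (H.neighborSet u).ncard = (H.neighborSet v).ncard

/-- The distinguishing number `D(H)`: the least `d` such that `H` admits a vertex
coloring with `d` colors preserved only by the identity automorphism. -/
noncomputable def distinguishingNumber {W : Type*} (H : SimpleGraph W) : ℕ :=
  sInf {d | ∃ c : W → Fin d, ∀ φ : H ≃g H, (∀ v, c (φ v) = c v) → ∀ v, φ v = v}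

/-- The distinguishing index `D'(H)`: the least `d` such that `H` admits an edge
coloring with `d` colors preserved only by the identity automorphism. -/
noncomputable def distinguishingIndex {W : Type*} (H : SimpleGraph W) : ℕ :=
  sInf {d | ∃ c : H.edgeSet → Fin d,
    ∀ φ : H ≃g H, (∀ e, c (φ.mapEdgeSet e) = c e) → ∀ v, φ v = v}

/-- A proper total coloring of `H` with `d` colors: adjacent vertices, adjacent
edges, and incident vertex/edge pairs receive distinct colors. -/
def IsProperTotalColoring {W : Type*} (H : SimpleGraph W) {d : ℕ}
    (f : W ⊕ H.edgeSet → Fin d) : Prop :=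
  (∀ u v : W, H.Adj u v → f (Sum.inl u) ≠ f (Sum.inl v)) ∧
  (∀ e e' : H.edgeSet, e ≠ e' → (∃ u, u ∈ (e : Sym2 W) ∧ u ∈ (e' : Sym2 W)) →
    f (Sum.inr e) ≠ f (Sum.inr e')) ∧
  (∀ (v : W) (e : H.edgeSet), v ∈ (e : Sym2 W) → f (Sum.inl v) ≠ f (Sum.inr e))

/-- An automorphism `φ` preserves a total coloring `f`. -/
def PreservesTotalColoring {W : Type*} (H : SimpleGraph W) {d : ℕ}
    (f : W ⊕ H.edgeSet → Fin d) (φ : H ≃g H) : Prop :=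
  (∀ v : W, f (Sum.inl (φ v)) = f (Sum.inl v)) ∧
  (∀ e : H.edgeSet, f (Sum.inr (φ.mapEdgeSet e)) = f (Sum.inr e))

/-- The total chromatic number `χ''(H)`. -/
noncomputable def totalChromaticNumber {W : Type*} (H : SimpleGraph W) : ℕ :=
  sInf {d | ∃ f : W ⊕ H.edgeSet → Fin d, IsProperTotalColoring H f}

/-- The total distinguishing chromatic number `χ''_D(H)`: the least `d` such that
`H` has a proper total coloring with `d` colors preserved only by the identity. -/
noncomputable def totalDistinguishingChromaticNumber {W : Type*} (H : SimpleGraph W) : ℕ :=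
  sInf {d | ∃ f : W ⊕ H.edgeSet → Fin d, IsProperTotalColoring H f ∧
    ∀ φ : H ≃g H, PreservesTotalColoring H f φ → ∀ v, φ v = v}

/-- The color class `C_H(u)` of a vertex under a total coloring: the color of `u`
together with the colors of the edges incident to `u`. -/
def totalColorClass {W : Type*} (H : SimpleGraph W) {d : ℕ}
    (f : W ⊕ H.edgeSet → Fin d) (u : W) : Set (Fin d) :=
  {f (Sum.inl u)} ∪ {x | ∃ e : H.edgeSet, u ∈ (e : Sym2 W) ∧ x = f (Sum.inr e)}

/-- An AVD-total coloring: a proper total coloring in which adjacent vertices have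
distinct color classes. -/
def IsAVDTotalColoring {W : Type*} (H : SimpleGraph W) {d : ℕ}
    (f : W ⊕ H.edgeSet → Fin d) : Prop :=
  IsProperTotalColoring H f ∧
  ∀ u v : W, H.Adj u v → totalColorClass H f u ≠ totalColorClass H f v

/-- The AVD-total chromatic number `χ''ₐ(H)`. -/
noncomputable def avdTotalChromaticNumber {W : Type*} (H : SimpleGraph W) : ℕ :=
  sInf {d | ∃ f : W ⊕ H.edgeSet → Fin d, IsAVDTotalColoring H f}

/-- A total dominator coloring: a proper vertex coloring such that every vertex is
adjacent to every vertex of some (nonempty) color class. -/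
def IsTotalDominatorColoring {W : Type*} (H : SimpleGraph W) {d : ℕ}
    (c : W → Fin d) : Prop :=
  (∀ u v : W, H.Adj u v → c u ≠ c v) ∧
  (∀ v : W, ∃ i : Fin d, (∃ w, c w = i) ∧ ∀ w, c w = i → H.Adj v w)

/-- The total dominator chromatic number `χᵗ_d(H)`. -/
noncomputable def tdChromaticNumber {W : Type*} (H : SimpleGraph W) : ℕ :=
  sInf {d | ∃ c : W → Fin d, IsTotalDominatorColoring H c}

/-!
Fix a linear order on `V` and a root `r`. In `M(G)`, colour the edge joining `v` to the
edge-vertex of `vw` by `1` when `w` is the least neighbour of `v` (by `2` if moreover `v = r`),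
and the edge joining the edge-vertices of `uw` and `uw'` by `1` when `w` and `w'` are
consecutive neighbours of `u`; every other edge gets `0`.

Neighbourhoods of original vertices in `M(G)` are cliques while an edge-vertex of `ab` has the
non-adjacent neighbours `a` and `b`, so every automorphism of `M(G)` is induced by an
automorphism `σ` of `G`. If it preserves the colouring, `σ` fixes `r`, the only vertex at an
edge of colour `2`. If `σ` fixes `u`, it permutes the neighbours of `u`, fixing the least one
and keeping consecutive neighbours consecutive, so it fixes them all. By connectivity `σ` is
the identity.
-/

open Function

theorem Function.Injective.apply_eq_self_of_covBy {α : Type*} [LinearOrder α] [Finite α]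
    {f : α → α} (hf : Injective f) (hmin : ∀ a, IsMin a → IsMin (f a))
    (hcov : ∀ a b, a ⋖ b → f a ⋖ f b ∨ f b ⋖ f a) (a : α) : f a = a := by
  induction a using WellFoundedLT.induction with
  | _ a ih =>
  by_cases ha : IsMin a
  · rcases le_total (f a) a with h | h
    · exact ha.eq_of_le h
    · exact ((hmin a ha).eq_of_le h).symm
  obtain ⟨b, hba⟩ := not_isMin_iff.mp ha
  obtain ⟨p, -, hpa⟩ := exists_le_covBy_of_lt hba
  rcases lt_trichotomy (f a) a with hlt | heq | hgt
  · exact absurd (hf (ih _ hlt)) hlt.ne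
  · exact heq
  · rcases hcov p a hpa with h | h <;> rw [ih p hpa.lt] at h
    · exact (h.2 hpa.lt hgt).elim
    · exact absurd (h.lt.trans hpa.lt) hgt.not_gt

theorem Sym2.eq_and_eq_of_mk_eq_of_mk_eq {α : Type*} {u v a b a' b' : α}
    (h₁ : s(u, a) = s(v, a')) (h₂ : s(u, b) = s(v, b')) (hne : a' ≠ b') :
    u = v ∧ a = a' ∧ b = b' := by
  rcases Sym2.eq_iff.mp h₁ with ⟨rfl, rfl⟩ | ⟨rfl, rfl⟩
  · exact ⟨rfl, rfl, Sym2.congr_right.mp h₂⟩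
  · rcases Sym2.eq_iff.mp h₂ with ⟨rfl, rfl⟩ | ⟨rfl, -⟩
    · exact ⟨rfl, rfl, rfl⟩
    · exact (hne rfl).elim

theorem SimpleGraph.Preconnected.induction_on_adj {V : Type*} {G : SimpleGraph V}
    (hG : G.Preconnected) {p : V → Prop} {r : V} (hr : p r)
    (hadj : ∀ u v, G.Adj u v → p u → p v) (v : V) : p v := by
  obtain ⟨w⟩ := hG r v
  induction w with
  | nil => exact hr
  | cons h _ ih => exact ih (hadj _ _ h hr)

section MiddleGraph

variable {V V' : Type*} {G : SimpleGraph V} {G' : SimpleGraph V'}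

theorem middleGraph_not_adj_inl_inl (G : SimpleGraph V) (u v : V) :
    ¬ (middleGraph G).Adj (Sum.inl u) (Sum.inl v) := id

theorem middleGraph_isClique_neighborSet_inl (v : V) :
    (middleGraph G).IsClique ((middleGraph G).neighborSet (Sum.inl v)) := by
  rintro (u | e) he (w | f) hf hne
  · exact (middleGraph_not_adj_inl_inl G v u he).elim
  · exact (middleGraph_not_adj_inl_inl G v u he).elim
  · exact (middleGraph_not_adj_inl_inl G v w hf).elim
  · exact ⟨fun h => hne (congrArg Sum.inr h), v, he, hf⟩

theorem middleGraph_iso_apply_inl (φ : middleGraph G ≃g middleGraph G') (v : V) :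
    ∃ v', φ (Sum.inl v) = Sum.inl v' := by
  rcases hv : φ (Sum.inl v) with v' | ⟨f, hf⟩
  · exact ⟨v', rfl⟩
  induction f using Sym2.ind with
  | _ a b =>
  have hnbr : ∀ x ∈ s(a, b), (middleGraph G).Adj (Sum.inl v) (φ.symm (Sum.inl x)) := by
    intro x hx
    rw [← φ.map_adj_iff, hv, φ.apply_symm_apply]
    exact hx
  have hne : φ.symm (Sum.inl a) ≠ φ.symm (Sum.inl b) := fun h =>
    (G'.mem_edgeSet.mp hf).ne (Sum.inl_injective (φ.symm.injective h))
  have hadj := φ.map_adj_iff.mpr <| middleGraph_isClique_neighborSet_inl v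
    (hnbr a (Sym2.mem_mk_left a b)) (hnbr b (Sym2.mem_mk_right a b)) hne
  rw [φ.apply_symm_apply, φ.apply_symm_apply] at hadj
  exact (middleGraph_not_adj_inl_inl G' a b hadj).elim

theorem middleGraph_iso_apply_inr {φ : middleGraph G ≃g middleGraph G'} {σ : V → V'}
    (hσ : ∀ v, φ (Sum.inl v) = Sum.inl (σ v)) {a b : V} (hab : G.Adj a b) :
    ∃ h : G'.Adj (σ a) (σ b), φ (Sum.inr ⟨s(a, b), hab⟩) = Sum.inr ⟨s(σ a, σ b), h⟩ := by
  have hnbr : ∀ x ∈ s(a, b),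
      (middleGraph G').Adj (Sum.inl (σ x)) (φ (Sum.inr ⟨s(a, b), hab⟩)) := by
    intro x hx
    rw [← hσ, φ.map_adj_iff]
    exact hx
  have hne : σ a ≠ σ b := fun h =>
    hab.ne (Sum.inl_injective (φ.injective (by rw [hσ, hσ, h])))
  rcases he : φ (Sum.inr ⟨s(a, b), hab⟩) with x | ⟨f, hf⟩
  · have := hnbr a (Sym2.mem_mk_left a b)
    rw [he] at this
    exact (middleGraph_not_adj_inl_inl G' _ _ this).elim
  · have ha := hnbr a (Sym2.mem_mk_left a b)
    have hb := hnbr b (Sym2.mem_mk_right a b)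
    rw [he] at ha hb
    obtain rfl : f = s(σ a, σ b) := (Sym2.mem_and_mem_iff hne).mp ⟨ha, hb⟩
    exact ⟨hf, rfl⟩

noncomputable def middleGraphBaseMap (φ : middleGraph G ≃g middleGraph G') (v : V) : V' :=
  (middleGraph_iso_apply_inl φ v).choose

theorem middleGraph_iso_apply_inl_eq (φ : middleGraph G ≃g middleGraph G') (v : V) :
    φ (Sum.inl v) = Sum.inl (middleGraphBaseMap φ v) :=
  (middleGraph_iso_apply_inl φ v).choose_spec

theorem middleGraphBaseMap_symm_apply (φ : middleGraph G ≃g middleGraph G') (v : V) :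
    middleGraphBaseMap φ.symm (middleGraphBaseMap φ v) = v := by
  apply Sum.inl_injective
  rw [← middleGraph_iso_apply_inl_eq, ← middleGraph_iso_apply_inl_eq, φ.symm_apply_apply]

theorem middleGraphBaseMap_adj (φ : middleGraph G ≃g middleGraph G') {a b : V}
    (hab : G.Adj a b) : G'.Adj (middleGraphBaseMap φ a) (middleGraphBaseMap φ b) :=
  (middleGraph_iso_apply_inr (middleGraph_iso_apply_inl_eq φ) hab).1

noncomputable def SimpleGraph.Iso.ofMiddleGraph (φ : middleGraph G ≃g middleGraph G') :
    G ≃g G' where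
  toFun := middleGraphBaseMap φ
  invFun := middleGraphBaseMap φ.symm
  left_inv := middleGraphBaseMap_symm_apply φ
  right_inv := middleGraphBaseMap_symm_apply φ.symm
  map_rel_iff' {a b} := by
    change G'.Adj (middleGraphBaseMap φ a) (middleGraphBaseMap φ b) ↔ G.Adj a b
    refine ⟨fun h => ?_, middleGraphBaseMap_adj φ⟩
    simpa only [middleGraphBaseMap_symm_apply] using middleGraphBaseMap_adj φ.symm h

theorem SimpleGraph.Iso.ofMiddleGraph_inl (φ : middleGraph G ≃g middleGraph G') (v : V) :
    φ (Sum.inl v) = Sum.inl (φ.ofMiddleGraph v) :=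
  middleGraph_iso_apply_inl_eq φ v

theorem SimpleGraph.Iso.ofMiddleGraph_inr (φ : middleGraph G ≃g middleGraph G')
    (e : G.edgeSet) : φ (Sum.inr e) = Sum.inr (φ.ofMiddleGraph.mapEdgeSet e) := by
  obtain ⟨e, he⟩ := e
  induction e using Sym2.ind with
  | _ a b => exact (middleGraph_iso_apply_inr (φ.ofMiddleGraph_inl) he).2

end MiddleGraph

section Coloring

variable {V : Type*} [LinearOrder V] (G : SimpleGraph V) (r : V)

open Classical in
noncomputable def incidenceColor (v : V) (z : Sym2 V) : Fin 3 :=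
  if ∃ w : G.neighborSet v, IsMin w ∧ z = s(v, ↑w) then (if v = r then 2 else 1) else 0

open Classical in
noncomputable def cliqueColor (z z' : Sym2 V) : Fin 3 :=
  if ∃ u, ∃ a b : G.neighborSet u, a ⋖ b ∧ s(z, z') = s(s(u, ↑a), s(u, ↑b)) then 1 else 0

theorem cliqueColor_comm (z z' : Sym2 V) : cliqueColor G z z' = cliqueColor G z' z := by
  rw [cliqueColor, cliqueColor, Sym2.eq_swap (a := z)]

noncomputable def middleColor : V ⊕ G.edgeSet → V ⊕ G.edgeSet → Fin 3
  | Sum.inl v, Sum.inr e => incidenceColor G r v e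
  | Sum.inr e, Sum.inl v => incidenceColor G r v e
  | Sum.inr e, Sum.inr f => cliqueColor G e f
  | Sum.inl _, Sum.inl _ => 0

theorem middleColor_comm (x y : V ⊕ G.edgeSet) : middleColor G r x y = middleColor G r y x := by
  rcases x with v | e <;> rcases y with w | f
  · rfl
  · rfl
  · rfl
  · exact cliqueColor_comm G e f

noncomputable def middleEdgeColoring (x : (middleGraph G).edgeSet) : Fin 3 :=
  Sym2.lift ⟨middleColor G r, middleColor_comm G r⟩ x

variable {G r}

theorem incidenceColor_ne_zero_iff {v : V} (w : G.neighborSet v) :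
    incidenceColor G r v s(v, ↑w) ≠ 0 ↔ IsMin w := by
  have hfirst : (∃ w' : G.neighborSet v, IsMin w' ∧ s(v, ↑w) = s(v, ↑w')) ↔ IsMin w :=
    ⟨fun ⟨_, hw', he⟩ => Subtype.ext (Sym2.congr_right.mp he) ▸ hw', fun hw => ⟨w, hw, rfl⟩⟩
  rw [← hfirst, incidenceColor]
  split_ifs <;> simp_all

theorem incidenceColor_of_isMin {w : G.neighborSet r} (hw : IsMin w) :
    incidenceColor G r r s(r, ↑w) = 2 := by
  rw [incidenceColor, if_pos ⟨w, hw, rfl⟩, if_pos rfl]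

theorem eq_of_incidenceColor_eq_two {v : V} {z : Sym2 V} (h : incidenceColor G r v z = 2) :
    v = r := by
  unfold incidenceColor at h
  split_ifs at h <;> simp_all

theorem cliqueColor_eq_one_iff {u : V} {a b : G.neighborSet u} :
    cliqueColor G s(u, ↑a) s(u, ↑b) = 1 ↔ a ⋖ b ∨ b ⋖ a := by
  unfold cliqueColor
  constructor
  · intro h
    split_ifs at h with hcons
    · obtain ⟨v, a', b', hcov, he⟩ := hcons
      have hne : (a' : V) ≠ b' := Subtype.coe_injective.ne hcov.ne
      rcases Sym2.eq_iff.mp he with ⟨h₁, h₂⟩ | ⟨h₁, h₂⟩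
      · obtain ⟨rfl, ha, hb⟩ := Sym2.eq_and_eq_of_mk_eq_of_mk_eq h₁ h₂ hne
        rw [Subtype.ext ha, Subtype.ext hb]
        exact Or.inl hcov
      · obtain ⟨rfl, hb, ha⟩ := Sym2.eq_and_eq_of_mk_eq_of_mk_eq h₂ h₁ hne
        rw [Subtype.ext ha, Subtype.ext hb]
        exact Or.inr hcov
    · simp at h
  · rintro (h | h)
    · exact if_pos ⟨u, a, b, h, rfl⟩
    · exact if_pos ⟨u, b, a, h, Sym2.eq_swap⟩

end Coloring

section Distinguishing

variable {V : Type*} [LinearOrder V] {G : SimpleGraph V} {r : V}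

theorem middleColor_apply_of_preserves {φ : middleGraph G ≃g middleGraph G}
    (hφ : ∀ x, middleEdgeColoring G r (φ.mapEdgeSet x) = middleEdgeColoring G r x)
    {x y : V ⊕ G.edgeSet} (hxy : (middleGraph G).Adj x y) :
    middleColor G r (φ x) (φ y) = middleColor G r x y :=
  hφ ⟨s(x, y), hxy⟩

theorem incidenceColor_ofMiddleGraph {φ : middleGraph G ≃g middleGraph G}
    (hφ : ∀ x, middleEdgeColoring G r (φ.mapEdgeSet x) = middleEdgeColoring G r x)
    (v : V) (w : G.neighborSet v) :
    incidenceColor G r (φ.ofMiddleGraph v) s(φ.ofMiddleGraph v, φ.ofMiddleGraph w) =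
      incidenceColor G r v s(v, ↑w) := by
  have h := middleColor_apply_of_preserves hφ (x := Sum.inl v) (y := Sum.inr ⟨s(v, w), w.2⟩)
    (Sym2.mem_mk_left _ _)
  rwa [φ.ofMiddleGraph_inl, φ.ofMiddleGraph_inr] at h

theorem cliqueColor_ofMiddleGraph {φ : middleGraph G ≃g middleGraph G}
    (hφ : ∀ x, middleEdgeColoring G r (φ.mapEdgeSet x) = middleEdgeColoring G r x)
    (u : V) (a b : G.neighborSet u) (hab : a ≠ b) :
    cliqueColor G s(φ.ofMiddleGraph u, φ.ofMiddleGraph a) s(φ.ofMiddleGraph u, φ.ofMiddleGraph b) =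
      cliqueColor G s(u, ↑a) s(u, ↑b) := by
  have hne : (⟨s(u, a), a.2⟩ : G.edgeSet) ≠ ⟨s(u, b), b.2⟩ := fun h =>
    hab (Subtype.ext (Sym2.congr_right.mp (congrArg Subtype.val h)))
  have h := middleColor_apply_of_preserves hφ (x := Sum.inr ⟨s(u, a), a.2⟩)
    (y := Sum.inr ⟨s(u, b), b.2⟩) ⟨hne, u, Sym2.mem_mk_left _ _, Sym2.mem_mk_left _ _⟩
  rwa [φ.ofMiddleGraph_inr, φ.ofMiddleGraph_inr] at h

variable [Finite V] {σ : G ≃g G}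

theorem apply_root_eq_of_incidenceColor
    (hinc : ∀ v (w : G.neighborSet v),
      incidenceColor G r (σ v) s(σ v, σ w) = incidenceColor G r v s(v, ↑w))
    (hr : ∃ w, G.Adj r w) : σ r = r := by
  obtain ⟨w, hw⟩ := hr
  have : Nonempty (G.neighborSet r) := ⟨⟨w, hw⟩⟩
  obtain ⟨m, hm⟩ := Finite.exists_min (id : G.neighborSet r → G.neighborSet r)
  exact eq_of_incidenceColor_eq_two ((hinc r m).trans (incidenceColor_of_isMin fun y _ => hm y))

theorem apply_eq_of_adj_of_apply_eq
    (hinc : ∀ v (w : G.neighborSet v),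
      incidenceColor G r (σ v) s(σ v, σ w) = incidenceColor G r v s(v, ↑w))
    (hcl : ∀ u (a b : G.neighborSet u), a ≠ b →
      cliqueColor G s(σ u, σ a) s(σ u, σ b) = cliqueColor G s(u, ↑a) s(u, ↑b))
    {u w : V} (hu : σ u = u) (huw : G.Adj u w) : σ w = w := by
  let f : G.neighborSet u → G.neighborSet u := fun x =>
    ⟨σ x, by simpa only [mem_neighborSet, hu] using σ.map_adj_iff.mpr x.2⟩
  have hinj : Injective f := fun a b h => Subtype.ext (σ.injective (congrArg Subtype.val h))
  have hmin : ∀ a, IsMin a → IsMin (f a) := by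
    intro a ha
    have h := hinc u a
    rw [hu] at h
    exact (incidenceColor_ne_zero_iff (f a)).mp (h ▸ (incidenceColor_ne_zero_iff a).mpr ha)
  have hcov : ∀ a b, a ⋖ b → f a ⋖ f b ∨ f b ⋖ f a := by
    intro a b hab
    have h := hcl u a b hab.ne
    rw [hu] at h
    exact cliqueColor_eq_one_iff.mp (h.trans (cliqueColor_eq_one_iff.mpr (Or.inl hab)))
  exact congrArg Subtype.val (hinj.apply_eq_self_of_covBy hmin hcov ⟨w, huw⟩)

theorem apply_eq_self_of_incidenceColor_of_cliqueColor (hconn : G.Connected)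
    (hinc : ∀ v (w : G.neighborSet v),
      incidenceColor G r (σ v) s(σ v, σ w) = incidenceColor G r v s(v, ↑w))
    (hcl : ∀ u (a b : G.neighborSet u), a ≠ b →
      cliqueColor G s(σ u, σ a) s(σ u, σ b) = cliqueColor G s(u, ↑a) s(u, ↑b))
    (v : V) : σ v = v := by
  have hroot : σ r = r := by
    rcases subsingleton_or_nontrivial V with _ | _
    · exact Subsingleton.elim _ _
    · exact apply_root_eq_of_incidenceColor hinc (by
        simpa [IsIsolated] using hconn.preconnected.not_isIsolated r)
  exact hconn.preconnected.induction_on_adj (p := fun v => σ v = v) hroot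
    (fun _ _ huw hu => apply_eq_of_adj_of_apply_eq hinc hcl hu huw) v

theorem apply_eq_self_of_preserves_middleEdgeColoring (hconn : G.Connected)
    {φ : middleGraph G ≃g middleGraph G}
    (hφ : ∀ x, middleEdgeColoring G r (φ.mapEdgeSet x) = middleEdgeColoring G r x)
    (x : V ⊕ G.edgeSet) : φ x = x := by
  have hσ : ⇑φ.ofMiddleGraph = id := funext <|
    apply_eq_self_of_incidenceColor_of_cliqueColor hconn (incidenceColor_ofMiddleGraph hφ)
      (cliqueColor_ofMiddleGraph hφ)
  rcases x with v | e
  · rw [φ.ofMiddleGraph_inl, hσ, id]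
  · rw [φ.ofMiddleGraph_inr]
    congr
    exact Subtype.ext ((congrArg (Sym2.map · e.1) hσ).trans (congrFun Sym2.map_id e.1))

end Distinguishing

theorem stmt_9_general {V : Type*} [Fintype V] (G : SimpleGraph V)
    (hconn : G.Connected) :
    distinguishingIndex (middleGraph G) ≤ 3 := by
  let : LinearOrder V := LinearOrder.lift' _ (Fintype.equivFin V).injective
  obtain ⟨r⟩ := hconn.nonempty
  exact Nat.sInf_le ⟨middleEdgeColoring G r, fun φ hφ =>
    apply_eq_self_of_preserves_middleEdgeColoring hconn hφ⟩

/-- For any connected graph `G` (of order `n ≥ 1`),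
`D'(M(G)) ≤ 3`. -/
theorem stmt_9 {V : Type*} [Fintype V] (G : SimpleGraph V)
    (hconn : G.Connected) (hn : 1 ≤ Fintype.card V) :
    distinguishingIndex (middleGraph G) ≤ 3 :=
  stmt_9_general G hconn
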